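/- Specialness transfers along additive isomorphisms between strongly summable and union ultrafilters: let p be a strongly summable ultrafilter on ℕ, let x : ℕ → ℕ have sufficient growth with FS(x) ∈ p, let s : ℕ → 𝔽 be a sequence of pairwise disjoint nonempty finite sets, let φ : ℕ → 𝔽 be any map satisfying φ(∑_{i∈F} x_i) = ⋃_{i∈F} s_i for every nonempty finite F ⊆ ℕ, and suppose the pushforward ultrafilter u = φ(p) is a union ultrafilter. Then p is special (with respect to some sequence) if and only if u is special. -/
import Mathlib


/-- `FS(x)`: the set of all finite sums `∑_{i∈s} x i` over nonempty finite `s ⊆ ℕ`. -/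
def FS (x : ℕ → ℕ) : Set ℕ := {n | ∃ s : Finset ℕ, s.Nonempty ∧ ∑ i ∈ s, x i = n}

/-- `x` has sufficient growth: `x n > 4·∑_{i<n} x i` for every `n`. -/
def SufficientGrowth (x : ℕ → ℕ) : Prop :=
  ∀ n, 4 * ∑ i ∈ Finset.range n, x i < x n

/-- The `x`-support of `z`. -/
def xsupp (x : ℕ → ℕ) (z : ℕ) : Set ℕ :=
  {i | ∃ s : Finset ℕ, s.Nonempty ∧ ∑ j ∈ s, x j = z ∧ i ∈ s}

/-- The `x`-support of a sequence `y`: `⋃_n x-supp(y n)`. -/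
def xsuppSeq (x y : ℕ → ℕ) : Set ℕ := ⋃ n, xsupp x (y n)

/-- `p` is strongly summable. -/
def StronglySummable (p : Ultrafilter ℕ) : Prop :=
  ∀ A ∈ p, ∃ x : ℕ → ℕ, (∀ n, 0 < x n) ∧ FS x ⊆ A ∧ FS x ∈ p

/-- `p` is special with respect to `x`. -/
def SpecialWRT (p : Ultrafilter ℕ) (x : ℕ → ℕ) : Prop :=
  SufficientGrowth x ∧ FS x ∈ p ∧
    ∀ L : Set ℕ, L.Infinite →
      ∃ y : ℕ → ℕ, FS y ⊆ FS x ∧ FS y ∈ p ∧ (L \ xsuppSeq x y).Infinite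

/-- `𝔽`: the nonempty finite subsets of `ℕ`. -/
def FF : Type := {s : Finset ℕ // s.Nonempty}

/-- `FU(s)`: the set of all unions `⋃_{i∈t} s i` over nonempty finite `t ⊆ ℕ`. -/
def FU (s : ℕ → FF) : Set FF :=
  {u | ∃ t : Finset ℕ, t.Nonempty ∧ u.1 = t.biUnion fun i => (s i).1}

/-- `u` is a union ultrafilter. -/
def UnionUF (u : Ultrafilter FF) : Prop :=
  ∀ A ∈ u, ∃ s : ℕ → FF,
    (∀ i j, i ≠ j → Disjoint (s i).1 (s j).1) ∧ FU s ⊆ A ∧ FU s ∈ u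

/-- `u` is a special union ultrafilter. -/
def SpecialUnion (u : Ultrafilter FF) : Prop :=
  ∀ L : Set ℕ, L.Infinite → ∃ X ∈ u, (L \ ⋃ v ∈ X, ((v : FF).1 : Set ℕ)).Infinite


namespace SpecTrans

lemma sg_bound {x : ℕ → ℕ} (hx : SufficientGrowth x) (c : ℕ → ℕ)
    (hc : ∀ i, c i ≤ 2) (n : ℕ) :
    ∑ i ∈ Finset.range n, c i * x i < x n := by
  have h1 : ∑ i ∈ Finset.range n, c i * x i ≤ 2 * ∑ i ∈ Finset.range n, x i := by
    rw [Finset.mul_sum]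
    exact Finset.sum_le_sum fun i _ => Nat.mul_le_mul (hc i) le_rfl
  have h2 := hx n
  omega

lemma sg_coeff_unique {x : ℕ → ℕ} (hx : SufficientGrowth x) (c d : ℕ → ℕ)
    (hc : ∀ i, c i ≤ 2) (hd : ∀ i, d i ≤ 2) :
    ∀ n, ∑ i ∈ Finset.range n, c i * x i = ∑ i ∈ Finset.range n, d i * x i →
      ∀ i, i < n → c i = d i := by
  intro n
  induction n with
  | zero => intro _ i hi; omega
  | succ n ih =>
    intro h i hi
    rw [Finset.sum_range_succ, Finset.sum_range_succ] at h
    have hA := sg_bound hx c hc n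
    have hB := sg_bound hx d hd n
    have hcd : c n = d n := by
      have h1 : c n ≤ d n := by
        by_contra hlt
        push_neg at hlt
        have hkey : (d n + 1) * x n ≤ c n * x n := Nat.mul_le_mul hlt le_rfl
        rw [Nat.succ_mul] at hkey
        omega
      have h2 : d n ≤ c n := by
        by_contra hlt
        push_neg at hlt
        have hkey : (c n + 1) * x n ≤ d n * x n := Nat.mul_le_mul hlt le_rfl
        rw [Nat.succ_mul] at hkey
        omega
      omega
    rcases Nat.lt_or_ge i n with h2 | h2
    · refine ih ?_ i h2
      rw [hcd] at h
      omega
    · have : i = n := by omega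
      rw [this]; exact hcd

lemma sum_indicator {x : ℕ → ℕ} (F : Finset ℕ) (n : ℕ) (hF : F ⊆ Finset.range n) :
    ∑ i ∈ F, x i = ∑ i ∈ Finset.range n, (if i ∈ F then 1 else 0) * x i := by
  simp only [ite_mul, one_mul, zero_mul]
  rw [Finset.sum_ite_mem, Finset.inter_eq_right.mpr hF]

lemma rep_unique {x : ℕ → ℕ} (hx : SufficientGrowth x) {F G : Finset ℕ}
    (h : ∑ i ∈ F, x i = ∑ i ∈ G, x i) : F = G := by
  obtain ⟨n, hn⟩ := (F ∪ G).exists_nat_subset_range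
  have hFn : F ⊆ Finset.range n := Finset.subset_union_left.trans hn
  have hGn : G ⊆ Finset.range n := Finset.subset_union_right.trans hn
  have key := sg_coeff_unique hx (fun i => if i ∈ F then 1 else 0)
      (fun i => if i ∈ G then 1 else 0)
      (by intro i; split <;> omega) (by intro i; split <;> omega) n
      (by rw [← sum_indicator F n hFn, ← sum_indicator G n hGn]; exact h)
  ext i
  by_cases hi : i < n
  · have hk := key i hi
    constructor <;> intro him <;> by_contra h2 <;> simp [him, h2] at hk
  · constructor <;> intro him
    · exact absurd (Finset.mem_range.mp (hFn him)) hi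
    · exact absurd (Finset.mem_range.mp (hGn him)) hi

lemma rep_add {x : ℕ → ℕ} (hx : SufficientGrowth x) {F G H : Finset ℕ}
    (h : ∑ i ∈ F, x i + ∑ i ∈ G, x i = ∑ i ∈ H, x i) :
    Disjoint F G := by
  obtain ⟨n, hn⟩ := (F ∪ G ∪ H).exists_nat_subset_range
  have hFn : F ⊆ Finset.range n := (Finset.subset_union_left.trans Finset.subset_union_left).trans hn
  have hGn : G ⊆ Finset.range n := (Finset.subset_union_right.trans Finset.subset_union_left).trans hn
  have hHn : H ⊆ Finset.range n := Finset.subset_union_right.trans hn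
  have key := sg_coeff_unique hx
      (fun i => (if i ∈ F then 1 else 0) + (if i ∈ G then 1 else 0))
      (fun i => if i ∈ H then 1 else 0)
      (by intro i; split <;> split <;> omega) (by intro i; split <;> omega) n
      (by
        simp only [add_mul]
        rw [Finset.sum_add_distrib, ← sum_indicator F n hFn, ← sum_indicator G n hGn,
          ← sum_indicator H n hHn]
        exact h)
  rw [Finset.disjoint_left]
  intro a haF haG
  have hk := key a (Finset.mem_range.mp (hFn haF))
  simp only [haF, haG, if_true] at hk
  split at hk <;> omega


lemma self_mem_FS (z : ℕ → ℕ) (n : ℕ) : z n ∈ FS z :=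
  ⟨{n}, Finset.singleton_nonempty n, Finset.sum_singleton _ _⟩

lemma pair_mem_FS (z : ℕ → ℕ) {n m : ℕ} (h : n ≠ m) : z n + z m ∈ FS z :=
  ⟨{n, m}, ⟨n, by simp⟩, by rw [Finset.sum_pair h]⟩

lemma xsupp_eq {x : ℕ → ℕ} (hx : SufficientGrowth x) {H : Finset ℕ} (hne : H.Nonempty)
    {w : ℕ} (hw : ∑ i ∈ H, x i = w) : xsupp x w = ↑H := by
  ext i
  simp only [xsupp, Set.mem_setOf_eq, Finset.mem_coe]
  constructor
  · rintro ⟨S, _, hS, hiS⟩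
    rwa [rep_unique hx (hS.trans hw.symm)] at hiS
  · intro hi
    exact ⟨H, hne, hw, hi⟩

lemma condensation {x z : ℕ → ℕ} (hx : SufficientGrowth x) (hz : FS z ⊆ FS x) :
    ∃ F : ℕ → Finset ℕ,
      (∀ n, (F n).Nonempty) ∧ (∀ n, ∑ i ∈ F n, x i = z n) ∧
      (∀ n m, n ≠ m → Disjoint (F n) (F m)) ∧
      (∀ T : Finset ℕ, ∑ n ∈ T, z n = ∑ i ∈ T.biUnion F, x i) := by
  have h1 : ∀ n, ∃ Fn : Finset ℕ, Fn.Nonempty ∧ ∑ i ∈ Fn, x i = z n :=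
    fun n => hz (self_mem_FS z n)
  choose F hne hsum using h1
  have hdisj : ∀ n m, n ≠ m → Disjoint (F n) (F m) := by
    intro n m hnm
    obtain ⟨H, _, hH⟩ := hz (pair_mem_FS z hnm)
    have hkey : ∑ i ∈ F n, x i + ∑ i ∈ F m, x i = ∑ i ∈ H, x i := by
      rw [hsum n, hsum m]; exact hH.symm
    exact rep_add hx hkey
  refine ⟨F, hne, hsum, hdisj, ?_⟩
  intro T
  rw [Finset.sum_biUnion (by intro a _ b _ hab; exact hdisj a b hab)]
  exact Finset.sum_congr rfl fun n _ => (hsum n).symm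

lemma infinite_filter {f : ℕ → ℕ} {M : Set ℕ} (A : Set ℕ)
    (h : ((f '' M) \ A).Infinite) : {n | n ∈ M ∧ f n ∉ A}.Infinite := by
  by_contra hc
  rw [Set.not_infinite] at hc
  refine h ((hc.image f).subset ?_)
  rintro a ⟨⟨n, hn, rfl⟩, ha⟩
  exact ⟨n, ⟨hn, ha⟩, rfl⟩

lemma diff_infinite {L U : Set ℕ} (hL : L.Infinite) (h : (L ∩ U).Finite) :
    (L \ U).Infinite := by
  by_contra hc
  rw [Set.not_infinite] at hc
  exact hL (by simpa [Set.diff_union_inter] using hc.union h)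

lemma inter_infinite {L U : Set ℕ} (hL : L.Infinite) (h : (L \ U).Finite) :
    (L ∩ U).Infinite := by
  by_contra hc
  rw [Set.not_infinite] at hc
  exact hL (by simpa [Set.diff_union_inter] using h.union hc)


lemma specialWRT_of_exists {p : Ultrafilter ℕ} (hp : StronglySummable p)
    {x : ℕ → ℕ} (hx : SufficientGrowth x) (hxp : FS x ∈ p)
    (hex : ∃ x', SpecialWRT p x') : SpecialWRT p x := by
  classical
  obtain ⟨x', hx'g, hx'p, hx'spec⟩ := hex
  refine ⟨hx, hxp, ?_⟩
  intro L hL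
  obtain ⟨z, hzpos, hzsub, hzp⟩ := hp (FS x ∩ FS x') (Filter.inter_mem hxp hx'p)
  have hzx : FS z ⊆ FS x := fun w hw => (hzsub hw).1
  have hzx' : FS z ⊆ FS x' := fun w hw => (hzsub hw).2
  obtain ⟨F, hFne, hFsum, hFdisj, hFbig⟩ := condensation hx hzx
  obtain ⟨F', hF'ne, hF'sum, hF'disj, hF'big⟩ := condensation hx'g hzx'
  by_cases hcase : (L \ ⋃ n, ((F n : Finset ℕ) : Set ℕ)).Infinite
  · refine ⟨z, hzx, hzp, hcase.mono ?_⟩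
    apply Set.diff_subset_diff_right
    intro i hi
    obtain ⟨n, hn⟩ := Set.mem_iUnion.mp hi
    rw [xsupp_eq hx (hFne n) (hFsum n)] at hn
    exact Set.mem_iUnion.mpr ⟨n, hn⟩
  · rw [Set.not_infinite] at hcase
    have hLU : (L ∩ ⋃ n, ((F n : Finset ℕ) : Set ℕ)).Infinite := inter_infinite hL hcase
    set M : Set ℕ := {n | ∃ i, i ∈ L ∧ i ∈ F n} with hMdef
    have hM : M.Infinite := by
      by_contra h
      rw [Set.not_infinite] at h
      have hfin : (⋃ n ∈ M, ((F n : Finset ℕ) : Set ℕ)).Finite :=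
        h.biUnion (fun n _ => (F n).finite_toSet)
      refine hLU (hfin.subset ?_)
      rintro a ⟨haL, haU⟩
      obtain ⟨n, hn⟩ := Set.mem_iUnion.mp haU
      exact Set.mem_biUnion (⟨a, haL, hn⟩ : n ∈ M) hn
    set g : ℕ → ℕ := fun n => (F' n).min' (hF'ne n) with hgdef
    have hginj : Function.Injective g := by
      intro a b hab
      by_contra hne2
      have h1 : g a ∈ F' a := Finset.min'_mem _ _
      have h2 : g b ∈ F' b := Finset.min'_mem _ _
      rw [hab] at h1
      exact Finset.disjoint_left.mp (hF'disj a b hne2) h1 h2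
    obtain ⟨y', hy'sub, hy'p, hy'L⟩ := hx'spec (g '' M) (hM.image hginj.injOn)
    obtain ⟨w, hwpos, hwsub, hwp⟩ := hp (FS y' ∩ FS z) (Filter.inter_mem hy'p hzp)
    have hwz : FS w ⊆ FS z := fun a ha => (hwsub ha).2
    have hwy' : FS w ⊆ FS y' := fun a ha => (hwsub ha).1
    obtain ⟨G, hGne, hGsum, hGdisj, hGbig⟩ := condensation hx'g hy'sub
    refine ⟨w, hwz.trans hzx, hwp, ?_⟩
    have hS : {n | n ∈ M ∧ g n ∉ xsuppSeq x' y'}.Infinite := infinite_filter _ hy'L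
    have heex : ∀ n ∈ M, ∃ i, i ∈ L ∧ i ∈ F n := fun n hn => hn
    set e : ℕ → ℕ := fun n => if h : ∃ i, i ∈ L ∧ i ∈ F n then h.choose else 0 with hedef
    have heprop : ∀ n ∈ M, e n ∈ L ∧ e n ∈ F n := by
      intro n hn
      have hn' : ∃ i, i ∈ L ∧ i ∈ F n := hn
      simp only [hedef, dif_pos hn']
      exact hn'.choose_spec
    have heinj : Set.InjOn e M := by
      intro a ha b hb hab
      by_contra hne2
      have h1 := (heprop a ha).2
      have h2 := (heprop b hb).2
      rw [hab] at h1
      exact Finset.disjoint_left.mp (hFdisj a b hne2) h1 h2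
    have hfinal : e '' {n | n ∈ M ∧ g n ∉ xsuppSeq x' y'} ⊆ L \ xsuppSeq x w := by
      rintro _ ⟨n, ⟨hnM, hgn⟩, rfl⟩
      refine ⟨(heprop n hnM).1, ?_⟩
      intro hmem
      obtain ⟨k, hk⟩ := Set.mem_iUnion.mp hmem
      obtain ⟨T, hTne, hTsum⟩ := hwz (self_mem_FS w k)
      have hrep : ∑ i ∈ T.biUnion F, x i = w k := by rw [← hFbig T]; exact hTsum
      have hTFne : (T.biUnion F).Nonempty := by
        obtain ⟨m, hm⟩ := hTne
        obtain ⟨a, ha⟩ := hFne m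
        exact ⟨a, Finset.mem_biUnion.mpr ⟨m, hm, ha⟩⟩
      rw [xsupp_eq hx hTFne hrep] at hk
      obtain ⟨m, hmT, hem⟩ := Finset.mem_biUnion.mp (Finset.mem_coe.mp hk)
      have hmn : m = n := by
        by_contra hne2
        exact Finset.disjoint_left.mp (hFdisj m n hne2) hem (heprop n hnM).2
      subst hmn
      -- x'-side
      obtain ⟨Sy, hSyne, hSysum⟩ := hwy' (self_mem_FS w k)
      have hrep1 : ∑ i ∈ T.biUnion F', x' i = w k := by rw [← hF'big T]; exact hTsum
      have hrep2 : ∑ i ∈ Sy.biUnion G, x' i = w k := by rw [← hGbig Sy]; exact hSysum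
      have hequ : T.biUnion F' = Sy.biUnion G := rep_unique hx'g (hrep1.trans hrep2.symm)
      have hgmem : g m ∈ Sy.biUnion G := by
        rw [← hequ]
        exact Finset.mem_biUnion.mpr ⟨m, hmT, Finset.min'_mem _ _⟩
      obtain ⟨j, _, hgj⟩ := Finset.mem_biUnion.mp hgmem
      apply hgn
      refine Set.mem_iUnion.mpr ⟨j, ?_⟩
      rw [xsupp_eq hx'g (hGne j) (hGsum j)]
      exact hgj
    exact ((hS.image (heinj.mono (fun n hn => hn.1))).mono hfinal)


end SpecTrans

open SpecTrans in
/-- Specialness transfers along additive isomorphisms between strongly summable and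
union ultrafilters. -/
theorem special_transfers (p : Ultrafilter ℕ) (hp : StronglySummable p)
    (x : ℕ → ℕ) (hx : SufficientGrowth x) (hxp : FS x ∈ p)
    (s : ℕ → FF) (hs : ∀ i j, i ≠ j → Disjoint (s i).1 (s j).1)
    (φ : ℕ → FF)
    (hφ : ∀ F : Finset ℕ, F.Nonempty →
      (φ (∑ i ∈ F, x i)).1 = F.biUnion fun i => (s i).1)
    (hu : UnionUF (p.map φ)) :
    (∃ x' : ℕ → ℕ, SpecialWRT p x') ↔ SpecialUnion (p.map φ) := by
  
  classical
  constructor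
  · intro hex
    obtain ⟨-, -, hspec⟩ := specialWRT_of_exists hp hx hxp hex
    intro L hL
    by_cases hcase : {i | ∃ a, a ∈ L ∧ a ∈ (s i).1}.Infinite
    · obtain ⟨y, hysub, hyp, hyL⟩ := hspec _ hcase
      obtain ⟨Fy, hFyne, hFysum, hFydisj, hFybig⟩ := condensation hx hysub
      refine ⟨φ '' FS y, ?_, ?_⟩
      · rw [Ultrafilter.mem_map]
        exact Filter.mem_of_superset hyp (Set.subset_preimage_image φ _)
      · set e : ℕ → ℕ := fun i => if h : ∃ a, a ∈ L ∧ a ∈ (s i).1 then h.choose else 0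
          with hedef
        have heprop : ∀ i ∈ {i | ∃ a, a ∈ L ∧ a ∈ (s i).1}, e i ∈ L ∧ e i ∈ (s i).1 := by
          intro i hi
          have hi' : ∃ a, a ∈ L ∧ a ∈ (s i).1 := hi
          simp only [hedef, dif_pos hi']
          exact hi'.choose_spec
        have heinj : Set.InjOn e {i | ∃ a, a ∈ L ∧ a ∈ (s i).1} := by
          intro a ha b hb hab
          by_contra hne2
          have h1 := (heprop a ha).2
          have h2 := (heprop b hb).2
          rw [hab] at h1
          exact Finset.disjoint_left.mp (hs a b hne2) h1 h2
        have hfinal : e '' ({i | ∃ a, a ∈ L ∧ a ∈ (s i).1} \ xsuppSeq x y) ⊆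
            L \ ⋃ v ∈ φ '' FS y, ((v : FF).1 : Set ℕ) := by
          rintro _ ⟨i, ⟨hiM, hisupp⟩, rfl⟩
          refine ⟨(heprop i hiM).1, ?_⟩
          intro hmem
          obtain ⟨v, hv, hev⟩ := Set.mem_iUnion₂.mp hmem
          obtain ⟨w, hw, rfl⟩ := hv
          obtain ⟨H, hHne, hHsum⟩ := hysub hw
          have hφw : (φ w).1 = H.biUnion fun i => (s i).1 := by
            rw [← hHsum]; exact hφ H hHne
          rw [hφw] at hev
          obtain ⟨j, hjH, hej⟩ := Finset.mem_biUnion.mp (Finset.mem_coe.mp hev)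
          have hji : j = i := by
            by_contra hne2
            exact Finset.disjoint_left.mp (hs j i hne2) hej (heprop i hiM).2
          subst hji
          -- j ∈ H, show j ∈ xsuppSeq x y
          obtain ⟨T, hTne, hTsum⟩ := hw
          have hrep : ∑ i ∈ T.biUnion Fy, x i = w := by rw [← hFybig T]; exact hTsum
          have hHeq : H = T.biUnion Fy := rep_unique hx (hHsum.trans hrep.symm)
          rw [hHeq] at hjH
          obtain ⟨m, hmT, hjm⟩ := Finset.mem_biUnion.mp hjH
          refine hisupp (Set.mem_iUnion.mpr ⟨m, ?_⟩)
          rw [xsupp_eq hx (hFyne m) (hFysum m)]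
          exact hjm
        exact ((hyL.image (heinj.mono (fun n hn => hn.1))).mono hfinal)
    · rw [Set.not_infinite] at hcase
      refine ⟨φ '' FS x, ?_, ?_⟩
      · rw [Ultrafilter.mem_map]
        exact Filter.mem_of_superset hxp (Set.subset_preimage_image φ _)
      · have hsub : (L \ ⋃ i, ((s i).1 : Set ℕ)) ⊆
            L \ ⋃ v ∈ φ '' FS x, ((v : FF).1 : Set ℕ) := by
          apply Set.diff_subset_diff_right
          rintro a hmem
          obtain ⟨v, hv, hav⟩ := Set.mem_iUnion₂.mp hmem
          obtain ⟨w, hw, rfl⟩ := hv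
          obtain ⟨H, hHne, hHsum⟩ := hw
          have hφw : (φ w).1 = H.biUnion fun i => (s i).1 := by
            rw [← hHsum]; exact hφ H hHne
          rw [hφw] at hav
          obtain ⟨j, _, haj⟩ := Finset.mem_biUnion.mp (Finset.mem_coe.mp hav)
          exact Set.mem_iUnion.mpr ⟨j, haj⟩
        have hfin : (L ∩ ⋃ i, ((s i).1 : Set ℕ)).Finite := by
          have hcov : (L ∩ ⋃ i, ((s i).1 : Set ℕ)) ⊆
              ⋃ i ∈ {i | ∃ a, a ∈ L ∧ a ∈ (s i).1}, ((s i).1 : Set ℕ) := by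
            rintro a ⟨haL, haU⟩
            obtain ⟨i, hi⟩ := Set.mem_iUnion.mp haU
            exact Set.mem_biUnion (⟨a, haL, hi⟩ : i ∈ {i | ∃ a, a ∈ L ∧ a ∈ (s i).1}) hi
          exact (hcase.biUnion (fun i _ => (s i).1.finite_toSet)).subset hcov
        exact (diff_infinite hL hfin).mono hsub
  · intro hsu
    refine ⟨x, hx, hxp, ?_⟩
    intro L hL
    set m : ℕ → ℕ := fun i => (s i).1.min' (s i).2 with hmdef
    have hminj : Function.Injective m := by
      intro a b hab
      by_contra hne2
      have h1 : m a ∈ (s a).1 := Finset.min'_mem _ _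
      have h2 : m b ∈ (s b).1 := Finset.min'_mem _ _
      rw [hab] at h1
      exact Finset.disjoint_left.mp (hs a b hne2) h1 h2
    obtain ⟨X, hX, hXL⟩ := hsu (m '' L) (hL.image hminj.injOn)
    rw [Ultrafilter.mem_map] at hX
    obtain ⟨y, hypos, hysub, hyp⟩ := hp (φ ⁻¹' X ∩ FS x) (Filter.inter_mem hX hxp)
    have hyx : FS y ⊆ FS x := fun a ha => (hysub ha).2
    refine ⟨y, hyx, hyp, ?_⟩
    have hS : {i | i ∈ L ∧ m i ∉ ⋃ v ∈ X, ((v : FF).1 : Set ℕ)}.Infinite :=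
      infinite_filter _ hXL
    refine hS.mono ?_
    rintro i ⟨hiL, him⟩
    refine ⟨hiL, ?_⟩
    intro hmem
    obtain ⟨n, hn⟩ := Set.mem_iUnion.mp hmem
    obtain ⟨H, hHne, hHsum, hiH⟩ := hn
    have h1 : φ (y n) ∈ X := (hysub (self_mem_FS y n)).1
    have h2 : (φ (y n)).1 = H.biUnion fun i => (s i).1 := by
      rw [← hHsum]; exact hφ H hHne
    refine him (Set.mem_iUnion₂.mpr ⟨φ (y n), h1, ?_⟩)
    rw [h2]
    exact Finset.mem_coe.mpr (Finset.mem_biUnion.mpr ⟨i, hiH, Finset.min'_mem _ _⟩)
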